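/- For every element w of the Weyl group W(E₈), if ⟨û₇, w(û₈)⟩ < 0 then ⟨û₇, w(û₈)⟩ lies in the set {−√3/2, −1/√3, −1/(2√3)}. (Equivalently: the distances strictly greater than π/2 between a vertex of type 7 and a vertex of type 8 of the Coxeter complex of type E₈ are exactly among 5π/6, arccos(−1/√3), arccos(−1/(2√3)).) -/

import Mathlib

noncomputable section

open scoped RealInnerProductSpace

/-- Euclidean space `ℝ⁸`. -/
abbrev E8Space := EuclideanSpace ℝ (Fin 8)

/-- The fundamental root vectors of the root system of type `E₈`:
`r₁ = ½(1,1,1,−1,−1,−1,−1,−1)` and `rᵢ = eᵢ − eᵢ₋₁` for `2 ≤ i ≤ 8`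
(here indexed by `Fin 8`, so `j = 0` corresponds to `r₁`). -/
def E8root : Fin 8 → E8Space := fun j =>
  if j = 0 then WithLp.toLp 2 (fun i => if (i : ℕ) < 3 then (1 : ℝ) / 2 else -(1 / 2))
  else WithLp.toLp 2 (fun i => if i = j then (1 : ℝ) else if (i : ℕ) + 1 = (j : ℕ) then -1 else 0)

/-- The Weyl group `W(E₈)`: the subgroup of linear isometries of `ℝ⁸` generated by the
reflections `s_r(x) = x − 2(⟨x,r⟩/⟨r,r⟩)r` in the fundamental root vectors. -/
def WeylE8 : Subgroup (E8Space ≃ₗᵢ[ℝ] E8Space) :=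
  Subgroup.closure
    { f | ∃ j : Fin 8, ∀ x : E8Space,
        f x = x - ((2 * ⟪x, E8root j⟫ / ⟪E8root j, E8root j⟫) • E8root j) }

/-- `û₇ = (−1,−1,−1,−1,−1,−1,0,0)/√6`, a unit vector representing a vertex of type 7. -/
def u7hat : E8Space := WithLp.toLp 2 (fun i => (if (i : ℕ) < 6 then -1 else 0) / Real.sqrt 6)

/-- `û₈ = (−1,−1,−1,−1,−1,−1,−1,1)/(2√2)`, a unit vector representing a vertex of type 8. -/
def u8hat : E8Space := WithLp.toLp 2 (fun i => (if (i : ℕ) = 7 then 1 else -1) / (2 * Real.sqrt 2))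

/-!
The Weyl group preserves the root lattice `Λ`, since the inner products of the simple roots are
the (integral) Cartan integers. Up to the factor `√2`, `û₈` is the highest root, so `√2 • w û₈` is
a vector `y ∈ Λ` with `⟪y, y⟫ = 2`. Vectors of `Λ` have coordinates in `½ℤ`, all congruent modulo
`ℤ`; hence `x = 2y` is integral with `∑ xᵢ² = 8` and `⟪û₇, w û₈⟫ = -s / (4√3)`, where
`s = x₁ + ⋯ + x₆` is even. Cauchy–Schwarz gives `s² ≤ 48`, so a negative inner product
forces `s ∈ {2, 4, 6}`.
-/

/- Bourbaki's numbering, used by `CartanMatrix.E₈`, differs from that of `E8root` by swapping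
the first two nodes. -/
theorem inner_E8root (i j : Fin 8) :
    ⟪E8root i, E8root j⟫ = CartanMatrix.E₈ (Equiv.swap 0 1 i) (Equiv.swap 0 1 j) := by
  rw [PiLp.inner_apply]
  fin_cases i <;> fin_cases j <;>
    simp [E8root, Fin.sum_univ_eight, CartanMatrix.E₈, Equiv.swap_apply_of_ne_of_ne] <;>
    norm_num

section Reflection

variable {E : Type*} [NormedAddCommGroup E] [InnerProductSpace ℝ E]

theorem reflection_apply_involutive {g : E → E} {r : E} (hr : ⟪r, r⟫ ≠ 0)
    (hg : ∀ x, g x = x - (2 * ⟪x, r⟫ / ⟪r, r⟫) • r) (x : E) : g (g x) = x := by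
  have hgr : ⟪g x, r⟫ = -⟪x, r⟫ := by
    rw [hg, inner_sub_left, real_inner_smul_left]
    field_simp
    ring
  rw [hg (g x), hgr, hg x]
  module

theorem reflection_apply_mem {Λ : AddSubgroup E} {r x : E} (hr : r ∈ Λ) (hx : x ∈ Λ) {n : ℤ}
    (hn : 2 * ⟪x, r⟫ / ⟪r, r⟫ = n) : x - (2 * ⟪x, r⟫ / ⟪r, r⟫) • r ∈ Λ := by
  rw [hn, Int.cast_smul_eq_zsmul]
  exact sub_mem hx (zsmul_mem hr n)

end Reflection

def E8rootLattice : AddSubgroup E8Space :=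
  AddSubgroup.closure (Set.range E8root)

theorem exists_int_inner_E8root_eq_of_mem {x : E8Space} (hx : x ∈ E8rootLattice) (j : Fin 8) :
    ∃ n : ℤ, ⟪x, E8root j⟫ = n := by
  induction hx using AddSubgroup.closure_induction with
  | mem _ h =>
    obtain ⟨i, rfl⟩ := h
    exact ⟨_, inner_E8root i j⟩
  | zero => exact ⟨0, by simp⟩
  | add _ _ _ _ h₁ h₂ =>
    obtain ⟨m, hm⟩ := h₁
    obtain ⟨n, hn⟩ := h₂
    exact ⟨m + n, by rw [inner_add_left, hm, hn]; push_cast; rfl⟩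
  | neg _ _ h =>
    obtain ⟨n, hn⟩ := h
    exact ⟨-n, by rw [inner_neg_left, hn]; push_cast; rfl⟩

theorem inner_E8root_self (j : Fin 8) : ⟪E8root j, E8root j⟫ = 2 := by
  rw [inner_E8root]
  fin_cases j <;> rfl

theorem E8reflection_apply_mem {g : E8Space → E8Space} {j : Fin 8}
    (hg : ∀ x, g x = x - (2 * ⟪x, E8root j⟫ / ⟪E8root j, E8root j⟫) • E8root j)
    {x : E8Space} (hx : x ∈ E8rootLattice) : g x ∈ E8rootLattice := by
  obtain ⟨n, hn⟩ := exists_int_inner_E8root_eq_of_mem hx j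
  rw [hg]
  exact reflection_apply_mem (AddSubgroup.subset_closure ⟨j, rfl⟩) hx
    (n := n) (by rw [hn, inner_E8root_self]; ring)

theorem apply_mem_E8rootLattice_of_mem_WeylE8 {w : E8Space ≃ₗᵢ[ℝ] E8Space} (hw : w ∈ WeylE8)
    {x : E8Space} (hx : x ∈ E8rootLattice) : w x ∈ E8rootLattice := by
  induction hw using Subgroup.closure_induction'' generalizing x with
  | mem g hg => exact E8reflection_apply_mem hg.choose_spec hx
  | inv_mem g hg =>
    obtain ⟨j, hj⟩ := hg
    have hinv : g⁻¹ x = g x := by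
      conv_lhs => rw [← reflection_apply_involutive (by rw [inner_E8root_self]; norm_num) hj x]
      exact g.symm_apply_apply (g x)
    rw [hinv]
    exact E8reflection_apply_mem hj hx
  | one => exact hx
  | mul g h _ _ hg hh => exact hg (hh hx)

def E8highestRoot : E8Space := WithLp.toLp 2 (fun i => if (i : ℕ) = 7 then 1 / 2 else -(1 / 2))

theorem E8highestRoot_eq_sum :
    E8highestRoot = ∑ j, (![3, 2, 4, 6, 5, 4, 3, 2] : Fin 8 → ℤ) j • E8root j := by
  ext i
  fin_cases i <;> simp [E8highestRoot, E8root, Fin.sum_univ_eight] <;> norm_num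

theorem E8highestRoot_mem_E8rootLattice : E8highestRoot ∈ E8rootLattice := by
  rw [E8highestRoot_eq_sum]
  exact sum_mem fun j _ => zsmul_mem (AddSubgroup.subset_closure (Set.mem_range_self j)) _

theorem u8hat_eq : u8hat = (√2)⁻¹ • E8highestRoot := by
  ext i
  simp only [u8hat, E8highestRoot, PiLp.smul_apply, smul_eq_mul]
  split_ifs <;> field_simp

theorem inner_E8highestRoot_self : ⟪E8highestRoot, E8highestRoot⟫ = 2 := by
  rw [PiLp.inner_apply]
  simp [E8highestRoot]
  norm_num

theorem exists_two_mul_eq_of_mem_E8rootLattice {y : E8Space} (hy : y ∈ E8rootLattice) :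
    ∃ x : Fin 8 → ℤ, (∀ i, 2 * y i = x i) ∧ ∀ i, x i % 2 = x 0 % 2 := by
  induction hy using AddSubgroup.closure_induction with
  | mem _ h =>
    obtain ⟨j, rfl⟩ := h
    by_cases hj : j = 0
    · refine ⟨fun i => if (i : ℕ) < 3 then 1 else -1, fun i => ?_, fun i => ?_⟩
      · simp only [E8root, hj, if_true]
        split_ifs <;> norm_num
      · simp only
        split_ifs <;> omega
    · refine ⟨fun i => if i = j then 2 else if (i : ℕ) + 1 = j then -2 else 0, fun i => ?_,
        fun i => ?_⟩
      · simp only [E8root, hj, if_false]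
        split_ifs <;> norm_num
      · simp only
        split_ifs <;> omega
  | zero => exact ⟨0, fun i => by simp, fun i => rfl⟩
  | add _ _ _ _ h₁ h₂ =>
    obtain ⟨x, hx, hxpar⟩ := h₁
    obtain ⟨x', hx', hx'par⟩ := h₂
    refine ⟨x + x', fun i => ?_, fun i => ?_⟩
    · simp only [PiLp.add_apply, Pi.add_apply, Int.cast_add, ← hx, ← hx']
      ring
    · have := hxpar i; have := hx'par i
      simp only [Pi.add_apply]
      omega
  | neg _ _ h =>
    obtain ⟨x, hx, hxpar⟩ := h
    refine ⟨-x, fun i => ?_, fun i => ?_⟩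
    · simp [← hx]
    · have := hxpar i
      simp only [Pi.neg_apply]
      omega

theorem sum_six_eq_of_sum_sq_eq_eight {x : Fin 8 → ℤ} (hpar : ∀ i, x i % 2 = x 0 % 2)
    (hsq : ∑ i, x i ^ 2 = 8) (hpos : 0 < x 0 + x 1 + x 2 + x 3 + x 4 + x 5) :
    x 0 + x 1 + x 2 + x 3 + x 4 + x 5 = 2 ∨ x 0 + x 1 + x 2 + x 3 + x 4 + x 5 = 4 ∨
      x 0 + x 1 + x 2 + x 3 + x 4 + x 5 = 6 := by
  rw [Fin.sum_univ_eight] at hsq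
  have heven : (x 0 + x 1 + x 2 + x 3 + x 4 + x 5) % 2 = 0 := by
    have := hpar 1; have := hpar 2; have := hpar 3; have := hpar 4; have := hpar 5
    omega
  -- Cauchy–Schwarz for the first six coordinates
  have hle : (x 0 + x 1 + x 2 + x 3 + x 4 + x 5) ^ 2 ≤ 48 := by
    nlinarith [sq_nonneg (x 0 - x 1), sq_nonneg (x 0 - x 2), sq_nonneg (x 0 - x 3),
      sq_nonneg (x 0 - x 4), sq_nonneg (x 0 - x 5), sq_nonneg (x 1 - x 2),
      sq_nonneg (x 1 - x 3), sq_nonneg (x 1 - x 4), sq_nonneg (x 1 - x 5),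
      sq_nonneg (x 2 - x 3), sq_nonneg (x 2 - x 4), sq_nonneg (x 2 - x 5),
      sq_nonneg (x 3 - x 4), sq_nonneg (x 3 - x 5), sq_nonneg (x 4 - x 5),
      sq_nonneg (x 6), sq_nonneg (x 7)]
  have : x 0 + x 1 + x 2 + x 3 + x 4 + x 5 ≤ 6 := by nlinarith
  omega

theorem inner_u7hat (v : E8Space) : ⟪u7hat, v⟫ = -(v 0 + v 1 + v 2 + v 3 + v 4 + v 5) / √6 := by
  rw [PiLp.inner_apply]
  simp [u7hat, Fin.sum_univ_eight]
  ring

theorem inner_u7hat_inv_sqrt_two_smul {y : E8Space} {x : Fin 8 → ℤ} (hx : ∀ i, 2 * y i = x i) :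
    ⟪u7hat, (√2)⁻¹ • y⟫ = -((x 0 + x 1 + x 2 + x 3 + x 4 + x 5 : ℤ) : ℝ) / (4 * √3) := by
  have h6 : √6 = √2 * √3 := by rw [← Real.sqrt_mul (by norm_num)]; norm_num
  rw [real_inner_smul_right, inner_u7hat, h6]
  push_cast
  simp only [← hx]
  field_simp
  rw [Real.sq_sqrt zero_le_two]
  ring

theorem sum_sq_eq_four_mul_inner_self {y : E8Space} {x : Fin 8 → ℤ} (hx : ∀ i, 2 * y i = x i) :
    ((∑ i, x i ^ 2 : ℤ) : ℝ) = 4 * ⟪y, y⟫ := by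
  rw [PiLp.inner_apply, Finset.mul_sum]
  push_cast
  refine Finset.sum_congr rfl fun i _ => ?_
  simp only [← hx, RCLike.inner_apply, conj_trivial]
  ring

theorem inner_u7hat_u8hat_neg (w : E8Space ≃ₗᵢ[ℝ] E8Space) (hw : w ∈ WeylE8)
    (hneg : ⟪u7hat, w u8hat⟫ < 0) :
    ⟪u7hat, w u8hat⟫ ∈
      ({-(Real.sqrt 3 / 2), -(1 / Real.sqrt 3), -(1 / (2 * Real.sqrt 3))} : Set ℝ) := by
  obtain ⟨x, hx, hpar⟩ := exists_two_mul_eq_of_mem_E8rootLattice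
    (apply_mem_E8rootLattice_of_mem_WeylE8 hw E8highestRoot_mem_E8rootLattice)
  have hsq : ∑ i, x i ^ 2 = 8 := by
    have := sum_sq_eq_four_mul_inner_self hx
    rw [LinearIsometryEquiv.inner_map_map, inner_E8highestRoot_self] at this
    norm_num at this
    exact_mod_cast this
  rw [u8hat_eq, map_smul, inner_u7hat_inv_sqrt_two_smul hx] at hneg ⊢
  have hpos : 0 < x 0 + x 1 + x 2 + x 3 + x 4 + x 5 := by
    rw [neg_div, neg_lt_zero, div_pos_iff_of_pos_right (by positivity)] at hneg
    exact_mod_cast hneg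
  simp only [Set.mem_insert_iff, Set.mem_singleton_iff]
  rcases sum_six_eq_of_sum_sq_eq_eight hpar hsq hpos with h | h | h <;> rw [h]
  · right; right; field_simp; norm_num
  · right; left; field_simp; norm_num
  · left; field_simp; norm_num [Real.sq_sqrt (show (0 : ℝ) ≤ 3 by norm_num)]
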